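/- At any critical point of the regularized loss L_λ(θ) = (1/2)‖Y − Z_L‖_F² + (λ/2)‖θ‖₂² with λ > 0 — more precisely, at any parameter θ for which the gradient of L_λ with respect to each linear-layer weight matrix W_ℓ (ℓ ∈ {L1+1,…,L}) vanishes — the linear layers are exactly balanced: W_ℓ W_ℓ^⊤ = W_{ℓ+1}^⊤ W_{ℓ+1} for every ℓ ∈ {L1+1,…,L−1}. -/

import Mathlib

open Matrix Finset Real

/-- Frobenius norm of a real matrix. -/
noncomputable def frobNorm {m n : ℕ} (A : Matrix (Fin m) (Fin n) ℝ) : ℝ :=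
  Real.sqrt (∑ i, ∑ j, (A i j) ^ 2)

/-- Operator (spectral) norm of a real matrix. -/
noncomputable def opNorm {m n : ℕ} (A : Matrix (Fin m) (Fin n) ℝ) : ℝ :=
  sSup {x : ℝ | ∃ v : Fin n → ℝ, (∑ i, v i ^ 2) ≤ 1 ∧ x = Real.sqrt (∑ i, (A.mulVec v i) ^ 2)}

/-- The singular values of a real matrix, in non-increasing order (indexed by columns). -/
noncomputable def svals {m n : ℕ} (A : Matrix (Fin m) (Fin n) ℝ) : Fin n → ℝ := fun i =>
  Real.sqrt ((show (Aᵀ * A).IsHermitian by simpa [Matrix.conjTranspose_eq_transpose_of_trivial] using Matrix.isHermitian_conjTranspose_mul_self A).eigenvalues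
    (Tuple.sort ((show (Aᵀ * A).IsHermitian by simpa [Matrix.conjTranspose_eq_transpose_of_trivial] using Matrix.isHermitian_conjTranspose_mul_self A).eigenvalues) i.rev))

/-- `sval A k` is the `k`-th largest singular value of `A` (1-indexed). -/
noncomputable def sval {m n : ℕ} (A : Matrix (Fin m) (Fin n) ℝ) (k : ℕ) : ℝ :=
  if h : k - 1 < n then svals A ⟨k - 1, h⟩ else 0

/-- Smallest singular value of a (possibly rectangular) matrix. -/
noncomputable def smin {m n : ℕ} (A : Matrix (Fin m) (Fin n) ℝ) : ℝ :=
  sval A (min m n)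

/-- Condition number: the ratio between the largest and the smallest *nonzero*
singular values, i.e. the supremum of ratios of nonzero singular values. -/
noncomputable def kappa {m n : ℕ} (A : Matrix (Fin m) (Fin n) ℝ) : ℝ :=
  sSup {x : ℝ | ∃ i j : Fin n, svals A i ≠ 0 ∧ svals A j ≠ 0 ∧ x = svals A i / svals A j}

/- Multiplying the critical-point equation of `W₁` on the right by `W₁ᵀ`, and that of `W₂` on
the left by `W₂ᵀ`, turns both `c • W₁ * W₁ᵀ` and `c • W₂ᵀ * W₂` into the same matrix
`-(G * W₂)ᵀ * E * (W₁ * H)ᵀ`; cancelling the nonzero scalar `c` gives the balance. -/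

theorem Matrix.mul_transpose_self_eq_transpose_mul_self_of_grad_eq_zero
    {R k s q r m : Type*} [CommRing R] [NoZeroDivisors R]
    [Fintype k] [Fintype s] [Fintype q] [Fintype r] [Fintype m]
    (G : Matrix k s R) (W₂ : Matrix s q R) (W₁ : Matrix q r R) (H : Matrix r m R)
    (E : Matrix k m R) {c : R} (hc : c ≠ 0)
    (h₁ : (G * W₂)ᵀ * E * Hᵀ + c • W₁ = 0) (h₂ : Gᵀ * E * (W₁ * H)ᵀ + c • W₂ = 0) :
    W₁ * W₁ᵀ = W₂ᵀ * W₂ := by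
  have hW₁ : c • (W₁ * W₁ᵀ) = -((G * W₂)ᵀ * E * (W₁ * H)ᵀ) := by
    rw [← Matrix.smul_mul, eq_neg_of_add_eq_zero_right h₁, transpose_mul W₁]
    simp only [Matrix.neg_mul, Matrix.mul_assoc]
  have hW₂ : c • (W₂ᵀ * W₂) = -((G * W₂)ᵀ * E * (W₁ * H)ᵀ) := by
    rw [← Matrix.mul_smul, eq_neg_of_add_eq_zero_right h₂, transpose_mul G]
    simp only [Matrix.mul_neg, Matrix.mul_assoc]
  exact smul_right_injective _ hc (hW₁.trans hW₂.symm)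

theorem statement15_general
    (L1 L : ℕ)
    (n : ℕ → ℕ) (N : ℕ)
    (W : ∀ ℓ : ℕ, Matrix (Fin (n ℓ)) (Fin (n (ℓ - 1))) ℝ)
    (Y : Matrix (Fin (n L)) (Fin N) ℝ)
    (Z : ∀ ℓ : ℕ, Matrix (Fin (n ℓ)) (Fin N) ℝ)
    -- partial products: G ℓ = W_L ⋯ W_{ℓ+1} and H ℓ = W_ℓ ⋯ W_{L1+1}
    (G : ∀ ℓ : ℕ, Matrix (Fin (n L)) (Fin (n ℓ)) ℝ)
    (hGrec : ∀ ℓ, L1 ≤ ℓ → ℓ < L → G ℓ = G (ℓ + 1) * W (ℓ + 1))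
    (H : ∀ ℓ : ℕ, Matrix (Fin (n ℓ)) (Fin (n L1)) ℝ)
    (hHrec : ∀ ℓ, L1 + 1 ≤ ℓ → ℓ ≤ L → H ℓ = W ℓ * H (ℓ - 1))
    (lam : ℝ) (hlam : 0 < lam)
    -- the gradient of the regularized loss w.r.t. each linear layer vanishes
    (hcrit : ∀ ℓ, L1 + 1 ≤ ℓ → ℓ ≤ L →
      (G ℓ)ᵀ * (Z L - Y) * (Z L1)ᵀ * (H (ℓ - 1))ᵀ + lam • W ℓ = 0) :
    ∀ ℓ, L1 + 1 ≤ ℓ → ℓ ≤ L - 1 →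
      W ℓ * (W ℓ)ᵀ =
        (show Matrix (Fin (n ℓ)) (Fin (n ℓ)) ℝ from (W (ℓ + 1))ᵀ * W (ℓ + 1)) := by
  intro ℓ hℓ hℓL
  have hgrad : ∀ ℓ, L1 + 1 ≤ ℓ → ℓ ≤ L →
      (G ℓ)ᵀ * ((Z L - Y) * (Z L1)ᵀ) * (H (ℓ - 1))ᵀ + lam • W ℓ = 0 := by
    simpa only [Matrix.mul_assoc] using hcrit
  have h₁ := hgrad ℓ hℓ (by omega)
  have h₂ := hgrad (ℓ + 1) (by omega) (by omega)
  rw [hGrec ℓ (by omega) (by omega)] at h₁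
  refine mul_transpose_self_eq_transpose_mul_self_of_grad_eq_zero _ _ _ _ _ hlam.ne' h₁ ?_
  rwa [← hHrec ℓ hℓ (by omega)]

/-- at any critical point of the `λ`-regularized loss (the gradient with
respect to each linear-layer weight matrix vanishing), the linear layers are exactly
balanced. -/
theorem statement15
    (L1 L2 L : ℕ) (hL2 : 2 ≤ L2) (hLdef : L = L1 + L2)
    (n : ℕ → ℕ) (N K : ℕ) (hK : n L = K)
    (σ : ℝ → ℝ)
    (W : ∀ ℓ : ℕ, Matrix (Fin (n ℓ)) (Fin (n (ℓ - 1))) ℝ)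
    (X : Matrix (Fin (n 0)) (Fin N) ℝ)
    (Y : Matrix (Fin (n L)) (Fin N) ℝ)
    (Z : ∀ ℓ : ℕ, Matrix (Fin (n ℓ)) (Fin N) ℝ)
    (hZ0 : Z 0 = X)
    (hZnl : ∀ ℓ, 1 ≤ ℓ → ℓ ≤ L1 → Z ℓ = (W ℓ * Z (ℓ - 1)).map σ)
    (hZlin : ∀ ℓ, L1 + 1 ≤ ℓ → ℓ ≤ L → Z ℓ = W ℓ * Z (ℓ - 1))
    -- partial products: G ℓ = W_L ⋯ W_{ℓ+1} and H ℓ = W_ℓ ⋯ W_{L1+1}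
    (G : ∀ ℓ : ℕ, Matrix (Fin (n L)) (Fin (n ℓ)) ℝ)
    (hGL : G L = 1)
    (hGrec : ∀ ℓ, L1 ≤ ℓ → ℓ < L → G ℓ = G (ℓ + 1) * W (ℓ + 1))
    (H : ∀ ℓ : ℕ, Matrix (Fin (n ℓ)) (Fin (n L1)) ℝ)
    (hHL1 : H L1 = 1)
    (hHrec : ∀ ℓ, L1 + 1 ≤ ℓ → ℓ ≤ L → H ℓ = W ℓ * H (ℓ - 1))
    (lam : ℝ) (hlam : 0 < lam)
    -- the gradient of the regularized loss w.r.t. each linear layer vanishes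
    (hcrit : ∀ ℓ, L1 + 1 ≤ ℓ → ℓ ≤ L →
      (G ℓ)ᵀ * (Z L - Y) * (Z L1)ᵀ * (H (ℓ - 1))ᵀ + lam • W ℓ = 0) :
    ∀ ℓ, L1 + 1 ≤ ℓ → ℓ ≤ L - 1 →
      W ℓ * (W ℓ)ᵀ =
        (show Matrix (Fin (n ℓ)) (Fin (n ℓ)) ℝ from (W (ℓ + 1))ᵀ * W (ℓ + 1)) :=
  statement15_general L1 L n N W Y Z G hGrec H hHrec lam hlam hcrit
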